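/- arXiv:1512.07264 — 6 statements merged into one kernel-verified Lean document; each statement's English description precedes it below -/
import Mathlib

section
/- Let Q be a finite group acting on a commutative ring S by ring automorphisms, let R = S^Q be the fixed subring, and let h : S ⊗_R S → (Q → S) be the R-algebra map determined by h(s₁ ⊗ s₂)(q) = s₁ · (q • s₂) (pointwise operations on functions Q → S). If h is surjective, then for every q ∈ Q with q ≠ 1 and every maximal ideal 𝔭 of S, there exists s ∈ S such that s − q • s ∉ 𝔭. -/
open TensorProduct

/-- The subring of elements of `S` fixed by every element of `Q`. -/
def fixedSubring (Q S : Type*) [Group Q] [CommRing S] [MulSemiringAction Q S] :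
    Subring S where
  carrier := {s | ∀ q : Q, q • s = s}
  zero_mem' := fun q => smul_zero q
  one_mem' := fun q => smul_one q
  add_mem' := fun ha hb q => by rw [smul_add, ha q, hb q]
  mul_mem' := fun ha hb q => by rw [smul_mul', ha q, hb q]
  neg_mem' := fun ha q => by rw [smul_neg, ha q]

/-- Let a finite group `Q` act on a commutative ring `S` by ring automorphisms, let
`R = S^Q`, and let `h : S ⊗[R] S → (Q → S)` be the `R`-algebra map with
`h (s₁ ⊗ s₂) q = s₁ * (q • s₂)`.  If `h` is surjective, then for every `q ≠ 1` in `Q`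
and every maximal ideal `𝔭` of `S` there exists `s ∈ S` with `s - q • s ∉ 𝔭`. -/
theorem galois_separation_of_surjective (Q S : Type*) [Group Q] [Finite Q] [CommRing S]
    [MulSemiringAction Q S]
    (h : S ⊗[↥(fixedSubring Q S)] S →ₐ[↥(fixedSubring Q S)] (Q → S))
    (hh : ∀ (s₁ s₂ : S) (q : Q), h (s₁ ⊗ₜ[↥(fixedSubring Q S)] s₂) q = s₁ * (q • s₂))
    (hsurj : Function.Surjective h) :
    ∀ q : Q, q ≠ 1 → ∀ 𝔭 : Ideal S, 𝔭.IsMaximal → ∃ s : S, s - q • s ∉ 𝔭 := by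
  classical
  intro q hq 𝔭 hmax
  by_contra hcon
  push_neg at hcon
  obtain ⟨x, hx⟩ := hsurj (fun p => if p = 1 then 1 else 0)
  have key : ∀ y : S ⊗[↥(fixedSubring Q S)] S, h y 1 - h y q ∈ 𝔭 := by
    intro y
    induction y using TensorProduct.induction_on with
    | zero => simp
    | tmul a b =>
        rw [hh, hh, one_smul, ← mul_sub]
        exact Ideal.mul_mem_left 𝔭 a (hcon b)
    | add a b ha hb =>
        have : h (a + b) 1 - h (a + b) q = (h a 1 - h a q) + (h b 1 - h b q) := by
          simp [map_add]; ring
        rw [this]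
        exact Ideal.add_mem 𝔭 ha hb
  have := key x
  rw [hx] at this
  simp [hq] at this
  exact hmax.ne_top (Ideal.eq_top_of_isUnit_mem 𝔭 this isUnit_one)
end

section
/- Let Q be a group acting on a commutative ring S by ring automorphisms such that for every q ≠ 1 in Q and every maximal ideal 𝔭 of S there exists s ∈ S with s − q • s ∉ 𝔭 (the Galois separation condition). Let A be a ring containing S as a subring such that, as a left S-module, A is free with a basis (v_q)_{q ∈ Q} satisfying v₁ = 1 and v_q s = (q • s) v_q for all q ∈ Q and s ∈ S. Then the centralizer of S in A equals S; that is, an element x = Σ_q a_q v_q of A commutes with every element of S if and only if a_q = 0 for all q ≠ 1. -/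
/-!
Comparing coefficients at `v_q` in `x * s = s * x` gives `a_q * (q • s) = s * a_q`, so `a_q`
annihilates every `s - q • s`. For `q ≠ 1` the separation condition says these elements lie in
no maximal ideal, hence generate the unit ideal, and therefore `a_q = 0`. Conversely, if
`a_q = 0` for `q ≠ 1` then `x = a_1 ∈ S`, which commutes with `S`.
-/

theorem Ideal.eq_zero_of_mul_eq_zero_of_span_eq_top {S : Type*} [CommRing S] {T : Set S}
    (hT : Ideal.span T = ⊤) {a : S} (ha : ∀ t ∈ T, a * t = 0) : a = 0 := by
  have hle : Ideal.span T ≤ (S ∙ a).annihilator :=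
    Ideal.span_le.2 fun t ht => (Submodule.mem_annihilator_span_singleton a t).2 <| by
      rw [smul_eq_mul, mul_comm, ha t ht]
  simpa using (Submodule.mem_annihilator_span_singleton a 1).1 (hle (hT ▸ Submodule.mem_top))

theorem Ideal.span_eq_top_of_forall_isMaximal {S : Type*} [CommRing S] {T : Set S}
    (hT : ∀ 𝔭 : Ideal S, 𝔭.IsMaximal → ∃ t ∈ T, t ∉ 𝔭) : Ideal.span T = ⊤ := by
  by_contra hne
  obtain ⟨𝔭, h𝔭, hle⟩ := Ideal.exists_le_maximal _ hne
  obtain ⟨t, ht, ht𝔭⟩ := hT 𝔭 h𝔭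
  exact ht𝔭 (hle (Ideal.subset_span ht))

theorem eq_zero_of_mul_smul_eq_mul {S Q : Type*} [CommRing S] [Monoid Q] [MulSemiringAction Q S]
    {q : Q} (hsep : ∀ 𝔭 : Ideal S, 𝔭.IsMaximal → ∃ s : S, s - q • s ∉ 𝔭) {a : S}
    (ha : ∀ s : S, a * q • s = a * s) : a = 0 := by
  refine Ideal.eq_zero_of_mul_eq_zero_of_span_eq_top (T := Set.range fun s => s - q • s)
    (Ideal.span_eq_top_of_forall_isMaximal fun 𝔭 h𝔭 => ?_) ?_
  · obtain ⟨s, hs⟩ := hsep 𝔭 h𝔭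
    exact ⟨_, ⟨s, rfl⟩, hs⟩
  · rintro _ ⟨s, rfl⟩
    rw [mul_sub, ha, sub_self]

section CrossedBasis

variable {S Q A : Type*} [CommRing S] [Ring A] [Module S A] {ι : S →+* A}
  (hsmul : ∀ (s : S) (a : A), s • a = ι s * a) (v : Module.Basis Q S A)
include hsmul

theorem Module.Basis.repr_map_mul (s : S) (x : A) (q : Q) :
    v.repr (ι s * x) q = s * v.repr x q := by
  rw [← hsmul, map_smul, Finsupp.smul_apply, smul_eq_mul]

theorem Module.Basis.eq_map_of_repr_eq_zero [Monoid Q] (hv1 : v 1 = 1) {x : A}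
    (hx : ∀ q : Q, q ≠ 1 → v.repr x q = 0) : x = ι (v.repr x 1) := by
  have hrepr : v.repr x = Finsupp.single 1 (v.repr x 1) := by
    ext q
    by_cases hq : q = 1
    · simp [hq]
    · rw [hx q hq, Finsupp.single_eq_of_ne hq]
  conv_lhs => rw [← v.repr.symm_apply_apply x, hrepr, Module.Basis.repr_symm_single, hsmul, hv1]
  rw [mul_one]

theorem Module.Basis.repr_mul_map [Group Q] [MulSemiringAction Q S]
    (hv : ∀ (q : Q) (s : S), v q * ι s = ι (q • s) * v q) (s : S) (x : A) (q : Q) :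
    v.repr (x * ι s) q = v.repr x q * q • s := by
  -- `S` acts by left multiplication, so right multiplication by `ι s` is `S`-linear and both
  -- sides can be compared on the basis.
  let mulRight : A →ₗ[S] A :=
    { toFun := (· * ι s)
      map_add' := fun x y => add_mul x y (ι s)
      map_smul' := fun c x => by simp only [hsmul, mul_assoc, RingHom.id_apply] }
  have key : v.coord q ∘ₗ mulRight = (q • s) • v.coord q := v.ext fun q' => by
    classical
    simp only [LinearMap.comp_apply, LinearMap.smul_apply, Module.Basis.coord_apply, mulRight,
      LinearMap.coe_mk, AddHom.coe_mk, hv, v.repr_map_mul hsmul, v.repr_self_apply, smul_eq_mul]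
    split_ifs with h
    · rw [h]
    · ring
  simpa [mul_comm, mulRight] using LinearMap.congr_fun key x

end CrossedBasis

theorem centralizer_eq_base_of_crossed_basis_general (S Q A : Type*) [CommRing S] [Group Q]
    [MulSemiringAction Q S] [Ring A]
    (hsep : ∀ q : Q, q ≠ 1 → ∀ 𝔭 : Ideal S, 𝔭.IsMaximal → ∃ s : S, s - q • s ∉ 𝔭)
    (ι : S →+* A)
    [Module S A] (hsmul : ∀ (s : S) (a : A), s • a = ι s * a)
    (v : Module.Basis Q S A) (hv1 : v 1 = 1)
    (hv : ∀ (q : Q) (s : S), v q * ι s = ι (q • s) * v q) :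
    ∀ x : A, (∀ s : S, x * ι s = ι s * x) ↔ (∀ q : Q, q ≠ 1 → v.repr x q = 0) := by
  intro x
  constructor
  · intro hx q hq
    refine eq_zero_of_mul_smul_eq_mul (hsep q hq) fun s => ?_
    rw [← v.repr_mul_map hsmul hv, hx, v.repr_map_mul hsmul, mul_comm]
  · intro hx s
    rw [v.eq_map_of_repr_eq_zero hsmul hv1 hx, ← map_mul, ← map_mul, mul_comm]

/-- Let a group `Q` act on a commutative ring `S` by ring automorphisms satisfying the
Galois separation condition, and let `A` be a ring containing `S` (via an injective ring
homomorphism `ι`) that is free as a left `S`-module with a basis `(v_q)_{q ∈ Q}` such that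
`v_1 = 1` and `v_q · s = (q • s) · v_q`.  Then the centralizer of `S` in `A` equals `S`:
an element `x = Σ_q a_q v_q` commutes with every element of `S` if and only if `a_q = 0`
for all `q ≠ 1`. -/
theorem centralizer_eq_base_of_crossed_basis (S Q A : Type*) [CommRing S] [Group Q]
    [MulSemiringAction Q S] [Ring A]
    (hsep : ∀ q : Q, q ≠ 1 → ∀ 𝔭 : Ideal S, 𝔭.IsMaximal → ∃ s : S, s - q • s ∉ 𝔭)
    (ι : S →+* A) (hι : Function.Injective ι)
    [Module S A] (hsmul : ∀ (s : S) (a : A), s • a = ι s * a)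
    (v : Module.Basis Q S A) (hv1 : v 1 = 1)
    (hv : ∀ (q : Q) (s : S), v q * ι s = ι (q • s) * v q) :
    ∀ x : A, (∀ s : S, x * ι s = ι s * x) ↔ (∀ q : Q, q ≠ 1 → v.repr x q = 0) :=
  centralizer_eq_base_of_crossed_basis_general S Q A hsep ι hsmul v hv1 hv
end

section
/- Let S be a commutative ring and let M₁ and M₂ be finitely generated projective S-modules. Then the canonical S-algebra homomorphism End_S(M₁) ⊗_S End_S(M₂) → End_S(M₁ ⊗_S M₂), determined by (f ⊗ g) ↦ (m₁ ⊗ m₂ ↦ f(m₁) ⊗ g(m₂)), is an isomorphism of S-algebras. -/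
open TensorProduct

theorem Module.endTensorEndAlgHom_bijective {R M N : Type*} [CommSemiring R]
    [AddCommMonoid M] [Module R M] [AddCommMonoid N] [Module R N]
    [Module.Finite R M] [Module.Projective R M] [Module.Finite R N] [Module.Projective R N] :
    Function.Bijective (endTensorEndAlgHom (R := R) (S := R) (A := R) (M := M) (N := N)) := by
  have h : (endTensorEndAlgHom (R := R) (S := R) (A := R) (M := M) (N := N)).toLinearMap =
      (homTensorHomEquiv R M N M N).toLinearMap :=
    TensorProduct.ext' fun f g => (homTensorHomEquiv_apply (f ⊗ₜ g)).symm
  exact (congrArg DFunLike.coe h).symm ▸ (homTensorHomEquiv R M N M N).bijective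

/-- Let `S` be a commutative ring and `M₁`, `M₂` finitely generated projective `S`-modules.
Then the canonical `S`-algebra homomorphism
`End_S(M₁) ⊗[S] End_S(M₂) → End_S(M₁ ⊗[S] M₂)`, `f ⊗ g ↦ (m₁ ⊗ m₂ ↦ f m₁ ⊗ g m₂)`,
is an isomorphism of `S`-algebras. -/
theorem endTensorEnd_equiv (S M₁ M₂ : Type*) [CommRing S]
    [AddCommGroup M₁] [Module S M₁] [AddCommGroup M₂] [Module S M₂]
    [Module.Finite S M₁] [Module.Projective S M₁]
    [Module.Finite S M₂] [Module.Projective S M₂] :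
    ∃ e : (Module.End S M₁ ⊗[S] Module.End S M₂) ≃ₐ[S] Module.End S (M₁ ⊗[S] M₂),
      ∀ (f : Module.End S M₁) (g : Module.End S M₂),
        e (f ⊗ₜ[S] g) = TensorProduct.map f g :=
  ⟨.ofBijective _ Module.endTensorEndAlgHom_bijective, fun _ _ => rfl⟩
end

section
/- Let S be a commutative ring and M a faithful finitely generated projective S-module. Then the canonical algebra homomorphism S → End_S(M), s ↦ (m ↦ s·m), is injective and its image is exactly the center of End_S(M); that is, Z(End_S(M)) = S·id_M. -/
/-- Let `S` be a commutative ring and `M` a faithful finitely generated projective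
`S`-module.  Then the canonical algebra homomorphism `S → End_S(M)`, `s ↦ (m ↦ s • m)`,
is injective, and its image is exactly the center of `End_S(M)`. -/
theorem center_end_eq_base (S M : Type*) [CommRing S] [AddCommGroup M] [Module S M]
    [Module.Finite S M] [Module.Projective S M] [FaithfulSMul S M] :
    Function.Injective (algebraMap S (Module.End S M)) ∧
      Set.range (algebraMap S (Module.End S M)) =
        (Subring.center (Module.End S M) : Set (Module.End S M)) := by
  classical
  obtain ⟨n, π, σ, hsurj, hinj, hcomp⟩ :=
    Module.Finite.exists_comp_eq_id_of_projective S M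
  -- dual basis
  set x : Fin n → M := fun i => π (Pi.single i (1 : S)) with hx
  set f : Fin n → (M →ₗ[S] S) := fun i => (LinearMap.proj i).comp σ with hf
  have hdual : ∀ m : M, ∑ i, f i m • x i = m := by
    intro m
    have h1 : ∑ i, f i m • x i = π (∑ i, σ m i • (Pi.single i (1 : S) : Fin n → S)) := by
      rw [map_sum]
      simp [hx, hf, map_smul]
    rw [h1]
    have h2 : (∑ i, σ m i • (Pi.single i (1 : S) : Fin n → S)) = σ m := by
      funext j
      simp [Pi.single_apply, Finset.sum_apply, mul_comm]
    rw [h2]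
    exact congrFun (congrArg (fun p => p.toFun) hcomp) m
  constructor
  · intro a b h
    refine eq_of_smul_eq_smul (M := S) (α := M) fun m => ?_
    have := congrArg (fun φ : Module.End S M => φ m) h
    simpa [Module.algebraMap_end_apply] using this
  · apply Set.Subset.antisymm
    · rintro _ ⟨s, rfl⟩
      rw [SetLike.mem_coe, Subring.mem_center_iff]
      intro g
      exact (Algebra.commutes s g).symm
    · rintro φ hφ
      rw [SetLike.mem_coe, Subring.mem_center_iff] at hφ
      -- key commutation fact
      have key : ∀ (g : M →ₗ[S] S) (y m : M), g y • φ m = g (φ y) • m := by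
        intro g y m
        have := congrArg (fun ψ : Module.End S M => ψ y) (hφ (LinearMap.smulRight g m))
        simpa [Module.End.mul_apply, map_smul] using this.symm
      -- the trace ideal
      set T : Ideal S := Ideal.span {s : S | ∃ (g : M →ₗ[S] S) (y : M), g y = s} with hT
      have hgen : ∀ (g : M →ₗ[S] S) (y : M), g y ∈ T := fun g y =>
        Ideal.subset_span ⟨g, y, rfl⟩
      -- T is finitely generated
      have hexp : ∀ (g : M →ₗ[S] S) (y : M), g y = ∑ i, f i y * g (x i) := by
        intro g y
        conv_lhs => rw [← hdual y]
        rw [map_sum]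
        simp [smul_eq_mul]
      have hfg : T.FG := by
        refine ⟨Finset.image (fun p : Fin n × Fin n => f p.1 (x p.2)) Finset.univ, ?_⟩
        apply le_antisymm
        · rw [Ideal.span_le]
          rintro _ hs
          simp only [Finset.coe_image, Set.mem_image] at hs
          obtain ⟨p, _, rfl⟩ := hs
          exact hgen _ _
        · rw [hT, Ideal.span_le]
          rintro _ ⟨g, y, rfl⟩
          rw [hexp g y]
          refine Ideal.sum_mem _ fun i _ => Ideal.mul_mem_right _ _ ?_
          rw [hexp (f i) y]
          refine Ideal.sum_mem _ fun j _ => Ideal.mul_mem_left _ _ ?_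
          exact Ideal.subset_span (Finset.mem_coe.mpr
            (Finset.mem_image.mpr ⟨(i, j), Finset.mem_univ _, rfl⟩))
      -- T ≤ T • T
      have hle : T ≤ T • T := by
        rw [hT, Ideal.span_le]
        rintro _ ⟨g, y, rfl⟩
        rw [hexp g y]
        exact Submodule.sum_mem _ fun i _ =>
          Submodule.smul_mem_smul (hgen (f i) y) (hgen g (x i))
      -- Nakayama
      obtain ⟨r, hr1, hr0⟩ :=
        Submodule.exists_sub_one_mem_and_smul_eq_zero_of_fg_of_le_smul T T hfg hle
      have hr : r = 0 := by
        refine eq_of_smul_eq_smul (M := S) (α := M) fun m => ?_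
        rw [zero_smul, ← hdual m, Finset.smul_sum]
        refine Finset.sum_eq_zero fun i _ => ?_
        rw [smul_smul, ← smul_eq_mul, hr0 _ (hgen (f i) m), zero_smul]
      have hone : (1 : S) ∈ T := by
        have : -(1 : S) ∈ T := by rw [hr] at hr1; simpa using hr1
        simpa using T.neg_mem this
      -- every element of T acts on φ like a scalar
      have hscal : ∀ t ∈ T, ∃ s : S, ∀ m : M, t • φ m = s • m := by
        intro t ht
        refine Submodule.span_induction ?_ ?_ ?_ ?_ ht
        · rintro _ ⟨g, y, rfl⟩
          exact ⟨g (φ y), fun m => key g y m⟩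
        · exact ⟨0, fun m => by simp⟩
        · rintro a b _ _ ⟨s₁, h₁⟩ ⟨s₂, h₂⟩
          exact ⟨s₁ + s₂, fun m => by rw [add_smul, h₁, h₂, add_smul]⟩
        · rintro c a _ ⟨s, h⟩
          exact ⟨c * s, fun m => by
            rw [smul_eq_mul, mul_smul, h, mul_smul]⟩
      obtain ⟨s, hs⟩ := hscal 1 hone
      refine ⟨s, ?_⟩
      ext m
      rw [Module.algebraMap_end_apply, ← hs m, one_smul]
end

section
/- Let S be a commutative local ring and n ≥ 1. Then every S-algebra automorphism of the matrix algebra Mₙ(S) is inner, i.e., of the form X ↦ U X U⁻¹ for some invertible matrix U ∈ GLₙ(S). -/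
/-!
The images `α (single i j 1)` form a full system of matrix units acting on `Sⁿ`. Writing `P` for
the image of the idempotent `α (single i₀ i₀ 1)`, the maps `v ↦ α (single i₀ i 1) v` identify
`Sⁿ` with `Pⁿ`, and under this identification `α X` acts on `Pⁿ` by the matrix `X` (the Morita
picture). `P` is a direct summand of `Sⁿ`, hence finite projective, hence free since `S` is local;
comparing ranks in `Sⁿ ≅ Pⁿ` gives `P ≅ S`. The resulting automorphism of `Sⁿ` intertwines `α X`
with `X`, so its matrix conjugates one into the other.
-/

open Matrix Module

theorem Module.Projective.range_of_isIdempotentElem {R M : Type*} [Semiring R]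
    [AddCommMonoid M] [Module R M] [Projective R M] {f : M →ₗ[R] M} (hf : IsIdempotentElem f) :
    Projective R (LinearMap.range f) :=
  have hp := LinearMap.IsIdempotentElem.isProj_range f hf
  .of_split (LinearMap.range f).subtype hp.codRestrict (LinearMap.ext hp.codRestrict_apply_cod)

theorem Matrix.single_one_mul_eq_sum {R l m n : Type*} [Semiring R] [DecidableEq l]
    [DecidableEq m] [Fintype m] [Fintype n] [DecidableEq n] (i : l) (j : m) (X : Matrix m n R) :
    single i j (1 : R) * X = ∑ k, X j k • single i k 1 := by
  ext a b
  rcases eq_or_ne a i with rfl | h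
  · simp [Matrix.sum_apply, single_apply]
  · simp [Matrix.sum_apply, h, Ne.symm h]

theorem Matrix.exists_units_conj_of_intertwining {R m : Type*} [CommSemiring R] [Fintype m]
    [DecidableEq m] (f : Matrix m m R → Matrix m m R) (e : (m → R) ≃ₗ[R] (m → R))
    (he : ∀ X v, e (f X *ᵥ v) = X *ᵥ e v) :
    ∃ U : (Matrix m m R)ˣ, ∀ X, f X = U * X * ((U⁻¹ : (Matrix m m R)ˣ) : Matrix m m R) := by
  refine ⟨⟨LinearMap.toMatrix' e.symm, LinearMap.toMatrix' e, ?_, ?_⟩, fun X => ?_⟩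
  · simp [← LinearMap.toMatrix'_comp]
  · simp [← LinearMap.toMatrix'_comp]
  · refine Matrix.toLin'.injective (LinearMap.ext fun v => ?_)
    simp [eq_comm (a := f X *ᵥ v), LinearEquiv.symm_apply_eq, he]

namespace Matrix

section AlgHom

variable {R m V : Type*} [CommSemiring R] [Fintype m] [DecidableEq m] [AddCommMonoid V]
  [Module R V] (ρ : Matrix m m R →ₐ[R] Module.End R V)

theorem algHom_single_apply_single (i j k l : m) (v : V) :
    ρ (single i j 1) (ρ (single k l 1) v) = if j = k then ρ (single i l 1) v else 0 := by
  rw [← Module.End.mul_apply, ← map_mul]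
  split_ifs with h
  · rw [h, single_mul_single_same, mul_one]
  · rw [single_mul_single_of_ne (h := h), map_zero, LinearMap.zero_apply]

theorem isIdempotentElem_algHom_single (i : m) : IsIdempotentElem (ρ (single i i 1)) := by
  rw [IsIdempotentElem, ← map_mul, single_mul_single_same, mul_one]

def cornerPiEquiv (i₀ : m) : V ≃ₗ[R] (m → LinearMap.range (ρ (single i₀ i₀ 1))) where
  toFun v i := ⟨ρ (single i₀ i 1) v, ρ (single i₀ i 1) v, by
    rw [algHom_single_apply_single, if_pos rfl]⟩
  map_add' v w := by ext; simp
  map_smul' c v := by ext; simp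
  invFun p := ∑ i, ρ (single i i₀ 1) (p i)
  left_inv v := by
    simp only [algHom_single_apply_single, if_true]
    rw [← LinearMap.sum_apply, ← map_sum, sum_single_one, map_one, Module.End.one_apply]
  right_inv p := by
    funext j
    ext
    simp only [map_sum, algHom_single_apply_single, Finset.sum_ite_eq, Finset.mem_univ, if_true]
    exact (LinearMap.IsIdempotentElem.mem_range_iff
      (isIdempotentElem_algHom_single ρ i₀)).mp (p j).2

theorem cornerPiEquiv_apply_coe (i₀ : m) (v : V) (i : m) :
    (cornerPiEquiv ρ i₀ v i : V) = ρ (single i₀ i 1) v := rfl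

theorem cornerPiEquiv_algHom_apply (i₀ : m) (X : Matrix m m R) (v : V) (i : m) :
    cornerPiEquiv ρ i₀ (ρ X v) i = ∑ l, X i l • cornerPiEquiv ρ i₀ v l := by
  ext
  simp only [cornerPiEquiv_apply_coe, Submodule.coe_sum, Submodule.coe_smul]
  rw [← Module.End.mul_apply, ← map_mul, single_one_mul_eq_sum, map_sum, LinearMap.sum_apply]
  simp only [map_smul, LinearMap.smul_apply]

end AlgHom

theorem nonempty_range_algHom_single_equiv {R m : Type*} [CommRing R] [IsLocalRing R]
    [Fintype m] [DecidableEq m] (ρ : Matrix m m R →ₐ[R] Module.End R (m → R)) (i₀ : m) :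
    Nonempty (LinearMap.range (ρ (single i₀ i₀ 1)) ≃ₗ[R] R) := by
  set P := LinearMap.range (ρ (single i₀ i₀ 1))
  have : Projective R P :=
    Module.Projective.range_of_isIdempotentElem (isIdempotentElem_algHom_single ρ i₀)
  have : Free R P := free_of_flat_of_isLocalRing
  have hrank : Fintype.card m * 1 = Fintype.card m * finrank R P := by
    simpa [finrank_pi_fintype] using (cornerPiEquiv ρ i₀).finrank_eq
  refine ⟨LinearEquiv.ofFinrankEq _ _ ?_⟩
  rw [finrank_self, ← Nat.eq_of_mul_eq_mul_left (Fintype.card_pos_iff.mpr ⟨i₀⟩) hrank]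

end Matrix

/-- Over a commutative local ring `S`, every `S`-algebra automorphism of the matrix
algebra `Mₙ(S)` (`n ≥ 1`) is inner: it is conjugation by some invertible matrix. -/
theorem matrix_algAut_inner (S : Type*) [CommRing S] [IsLocalRing S] (n : ℕ) (hn : 1 ≤ n)
    (α : Matrix (Fin n) (Fin n) S ≃ₐ[S] Matrix (Fin n) (Fin n) S) :
    ∃ U : (Matrix (Fin n) (Fin n) S)ˣ,
      ∀ X : Matrix (Fin n) (Fin n) S, α X = (U : Matrix (Fin n) (Fin n) S) * X * ((U⁻¹ : (Matrix (Fin n) (Fin n) S)ˣ) : Matrix (Fin n) (Fin n) S) := by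
  let ρ := toLinAlgEquiv'.toAlgHom.comp α.toAlgHom
  let i₀ : Fin n := ⟨0, hn⟩
  obtain ⟨ψ⟩ := nonempty_range_algHom_single_equiv ρ i₀
  refine exists_units_conj_of_intertwining α
    ((cornerPiEquiv ρ i₀).trans (LinearEquiv.piCongrRight fun _ => ψ)) fun X v => ?_
  funext i
  change ψ (cornerPiEquiv ρ i₀ (ρ X v) i) = (X *ᵥ fun l => ψ (cornerPiEquiv ρ i₀ v l)) i
  rw [cornerPiEquiv_algHom_apply, map_sum]
  simp [mulVec, dotProduct]
end

section
/- (Rosenberg–Zelinsky) Let A be an Azumaya algebra over a commutative ring S. Then the group Out_S(A) of S-algebra automorphisms of A modulo inner automorphisms is abelian. -/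
/-!
For an automorphism `α` let `M_α = {c | ∀ x, c * x = α x * c}` be its twisted centralizer.
Through `A ⊗ Aᵐᵒᵖ ≃ End_S(A)`, the automorphism `α ⊗ 1` becomes an automorphism `Φ` of
`End_S(A)` that twists left multiplications by `α` and fixes right multiplications; applied to
the rank-one maps of a finite dual basis `∑ gᵢ(·) aᵢ = 1` of `A`, it yields elements
`Φ(gᵢ(·) 1)(1)` of `M_α` with `∑ Φ(gᵢ(·) 1)(1) * aᵢ = 1`, so `M_α A = A`. Hence `M_α M_{α⁻¹}`,
a central submodule, generates `A` as a right ideal, and Nakayama's lemma over the centre gives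
`∑ cᵢ dᵢ = 1` with `cᵢ ∈ M_α`, `dᵢ ∈ M_{α⁻¹}`. With such decompositions for `α` and for `β`
(`∑ eⱼ fⱼ = 1`), the element `u = ∑ cᵢ β(dᵢ)` lies in `M_{⁅α, β⁆}` and has inverse
`∑ eⱼ α(fⱼ)`, so conjugation by `u` is `⁅α, β⁆`.
-/

open TensorProduct
open scoped commutatorElement

theorem Submodule.exists_fin_sum_mul_eq_of_mem_mul {R A : Type*} [CommSemiring R] [Semiring A]
    [Algebra R A] {P Q : Submodule R A} {x : A} (hx : x ∈ P * Q) :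
    ∃ (n : ℕ) (p q : Fin n → A), (∀ i, p i ∈ P) ∧ (∀ i, q i ∈ Q) ∧ ∑ i, p i * q i = x := by
  refine Submodule.mul_induction_on hx
    (fun p hp q hq => ⟨1, ![p], ![q], by simp [hp], by simp [hq], by simp⟩) ?_
  rintro _ _ ⟨n, p, q, hp, hq, rfl⟩ ⟨m, p', q', hp', hq', rfl⟩
  exact ⟨n + m, Fin.append p p', Fin.append q q', Fin.addCases (by simpa) (by simpa),
    Fin.addCases (by simpa) (by simpa), by simp [Fin.sum_univ_add]⟩

theorem Module.exists_sum_smulRight_eq_one (R M : Type*) [CommSemiring R] [AddCommMonoid M]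
    [Module R M] [Module.Finite R M] [Module.Projective R M] :
    ∃ (n : ℕ) (m : Fin n → M) (φ : Fin n → Module.Dual R M), ∑ i, (φ i).smulRight (m i) = 1 := by
  obtain ⟨n, f, g, -, -, hfg⟩ := Module.Finite.exists_comp_eq_id_of_projective R M
  refine ⟨n, fun i => f (Pi.single i 1), fun i => LinearMap.proj i ∘ₗ g, ?_⟩
  ext x
  calc (∑ i, (LinearMap.proj i ∘ₗ g).smulRight (f (Pi.single i 1))) x
        = ∑ i, g x i • f (Pi.single i 1) := by simp
    _ = f (∑ i, Pi.single i (g x i)) := by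
        simp only [map_sum, ← map_smul, ← Pi.single_smul', smul_eq_mul, mul_one]
    _ = x := by rw [Finset.univ_sum_single, ← LinearMap.comp_apply, hfg, LinearMap.id_apply]

theorem Submodule.one_mem_of_le_center_of_mul_top_eq_top {S A : Type*} [CommRing S] [Ring A]
    [Algebra S A] [Module.Finite S A] {P : Submodule S A}
    (hPZ : P ≤ Subalgebra.toSubmodule (Subalgebra.center S A))
    (hZP : ∀ z ∈ Subalgebra.center S A, ∀ p ∈ P, z * p ∈ P) (hP : P * ⊤ = ⊤) :
    (1 : A) ∈ P := by
  set Z := Subalgebra.center S A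
  have : Module.Finite Z A := Module.Finite.of_restrictScalars_finite S Z A
  set I : Ideal Z := Ideal.span {z | (z : A) ∈ P}
  have hI : ∀ z ∈ I, (z : A) ∈ P := fun z hz => by
    induction hz using Submodule.span_induction with
    | mem z hz => exact hz
    | zero => exact P.zero_mem
    | add z z' _ _ hz hz' => exact P.add_mem hz hz'
    | smul a z _ hz => exact hZP a a.2 z hz
  have hIA : (⊤ : Submodule Z A) ≤ I • ⊤ := fun x _ => by
    have hx : x ∈ P * ⊤ := by rw [hP]; trivial
    refine Submodule.mul_induction_on hx (fun p hp y _ => ?_) fun _ _ => Submodule.add_mem _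
    exact (Submodule.smul_mem_smul (Ideal.subset_span hp) Submodule.mem_top :
      (⟨p, hPZ hp⟩ : Z) • y ∈ I • ⊤)
  obtain ⟨r, hr1, hr0⟩ := Submodule.exists_sub_one_mem_and_smul_eq_zero_of_fg_of_le_smul I ⊤
    Module.Finite.fg_top hIA
  have hr : (r : A) = 0 := by simpa [Subalgebra.smul_def] using hr0 1 trivial
  have hr1' : (r : A) - 1 ∈ P := hI _ hr1
  simpa [hr] using P.neg_mem hr1'

namespace AlgEquiv

variable {S A : Type*} [CommRing S] [Ring A] [Algebra S A]

def twistedCentralizer (α : A ≃ₐ[S] A) : Submodule S A where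
  carrier := {c | ∀ x, c * x = α x * c}
  add_mem' {c c'} hc hc' x := by rw [add_mul, mul_add, hc, hc']
  zero_mem' x := by rw [zero_mul, mul_zero]
  smul_mem' s c hc x := by rw [smul_mul_assoc, hc, mul_smul_comm]

variable {α β : A ≃ₐ[S] A} {c d : A}

theorem twistedCentralizer_one :
    (1 : A ≃ₐ[S] A).twistedCentralizer = Subalgebra.toSubmodule (Subalgebra.center S A) := by
  ext c
  simp [twistedCentralizer, Subalgebra.mem_center_iff, eq_comm]

theorem mul_mem_twistedCentralizer (hc : c ∈ α.twistedCentralizer)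
    (hd : d ∈ β.twistedCentralizer) : c * d ∈ (α * β).twistedCentralizer := fun x => by
  rw [mul_assoc, hd x, ← mul_assoc, hc, mul_assoc, mul_apply]

theorem twistedCentralizer_mul_le :
    α.twistedCentralizer * β.twistedCentralizer ≤ (α * β).twistedCentralizer :=
  Submodule.mul_le.2 fun _ hc _ hd => mul_mem_twistedCentralizer hc hd

theorem apply_mem_twistedCentralizer (β : A ≃ₐ[S] A) (hc : c ∈ α.twistedCentralizer) :
    β c ∈ (β * α * β⁻¹).twistedCentralizer := fun x => by
  calc β c * x = β (c * β.symm x) := by rw [map_mul, apply_symm_apply]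
    _ = (β * α * β⁻¹) x * β c := by rw [hc, map_mul]; rfl

theorem units_mul_mul_inv_of_mem_twistedCentralizer {u : Aˣ} (hu : ↑u ∈ α.twistedCentralizer)
    (x : A) : ↑u * x * ↑u⁻¹ = α x := by
  rw [hu x, Units.mul_inv_cancel_right]

theorem twistedCentralizer_mul_top_eq_top [Module.Finite S A] [Module.Projective S A]
    (α : A ≃ₐ[S] A) (Φ : Module.End S A →ₐ[S] Module.End S A)
    (hΦ : ∀ t, Φ (AlgHom.mulLeftRight S A t) =
      AlgHom.mulLeftRight S A (Algebra.TensorProduct.map α.toAlgHom (AlgHom.id S Aᵐᵒᵖ) t)) :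
    α.twistedCentralizer * ⊤ = ⊤ := by
  obtain ⟨n, a, g, hg⟩ := Module.exists_sum_smulRight_eq_one S A
  set L := AlgHom.mulLeftRight S A
  have hleft (ψ : Module.Dual S A) (x : A) : ψ.smulRight x = L (x ⊗ₜ 1) * ψ.smulRight 1 := by
    ext y; simp [L]
  have hright (ψ : Module.Dual S A) (x : A) :
      ψ.smulRight x = L (1 ⊗ₜ MulOpposite.op x) * ψ.smulRight 1 := by
    ext y; simp [L]
  have hmem (ψ : Module.Dual S A) : Φ (ψ.smulRight 1) 1 ∈ α.twistedCentralizer := fun x => by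
    simpa [hΦ, L] using congr(Φ $((hright ψ x).symm.trans (hleft ψ x)) 1)
  have hsum : ∑ i, Φ ((g i).smulRight 1) 1 * a i = 1 := by
    calc ∑ i, Φ ((g i).smulRight 1) 1 * a i = Φ (∑ i, (g i).smulRight (a i)) 1 := by
          rw [map_sum, LinearMap.sum_apply]
          refine Finset.sum_congr rfl fun i _ => ?_
          simp [hright _ (a i), hΦ, L]
      _ = 1 := by rw [hg, map_one Φ, Module.End.one_apply]
  refine top_unique fun y _ => ?_
  rw [← one_mul y, ← hsum, Finset.sum_mul]
  exact Submodule.sum_mem _ fun i _ => by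
    rw [mul_assoc]; exact Submodule.mul_mem_mul (hmem _) Submodule.mem_top

theorem twistedCentralizer_mul_top_eq_top_of_bijective [Module.Finite S A]
    [Module.Projective S A] (hA : Function.Bijective (AlgHom.mulLeftRight S A))
    (α : A ≃ₐ[S] A) : α.twistedCentralizer * ⊤ = ⊤ := by
  let E := AlgEquiv.ofBijective _ hA
  refine α.twistedCentralizer_mul_top_eq_top ((E : _ →ₐ[S] Module.End S A).comp
    ((Algebra.TensorProduct.map α.toAlgHom (AlgHom.id S Aᵐᵒᵖ)).comp E.symm)) fun t => ?_
  change E (Algebra.TensorProduct.map α.toAlgHom (AlgHom.id S Aᵐᵒᵖ) (E.symm (E t))) = _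
  rw [E.symm_apply_apply]
  rfl

theorem one_mem_twistedCentralizer_mul_inv [Module.Finite S A]
    (hα : α.twistedCentralizer * ⊤ = ⊤) (hα' : α⁻¹.twistedCentralizer * ⊤ = ⊤) :
    (1 : A) ∈ α.twistedCentralizer * α⁻¹.twistedCentralizer := by
  have hZ : Subalgebra.toSubmodule (Subalgebra.center S A) =
      (1 : A ≃ₐ[S] A).twistedCentralizer :=
    twistedCentralizer_one.symm
  refine Submodule.one_mem_of_le_center_of_mul_top_eq_top ?_ (fun z hz p hp => ?_)
    (by rw [mul_assoc, hα', hα])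
  · rw [hZ, ← mul_inv_cancel α]
    exact twistedCentralizer_mul_le
  · have hz' : z ∈ (1 : A ≃ₐ[S] A).twistedCentralizer := hZ ▸ hz
    have h := Submodule.mul_mem_mul hz' hp
    rw [← mul_assoc] at h
    exact mul_le_mul_left (twistedCentralizer_mul_le.trans_eq (by rw [one_mul])) _ h

theorem sum_mul_apply_mul_sum_mul_apply_eq_one {ι κ : Type*} [Fintype ι] [Fintype κ]
    {c d : ι → A} {e f : κ → A} (hd : ∀ i, d i ∈ α⁻¹.twistedCentralizer)
    (he : ∀ j, e j ∈ β.twistedCentralizer) (hcd : ∑ i, c i * d i = 1)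
    (hef : ∑ j, e j * f j = 1) : (∑ i, c i * β (d i)) * ∑ j, e j * α (f j) = 1 := by
  have key (i : ι) (j : κ) : c i * β (d i) * (e j * α (f j)) = c i * (e j * f j) * d i := by
    calc c i * β (d i) * (e j * α (f j)) = c i * (β (d i) * e j) * α (f j) := by
          simp only [mul_assoc]
      _ = c i * e j * (d i * α (f j)) := by rw [← he j (d i)]; simp only [mul_assoc]
      _ = c i * (e j * f j) * d i := by
          rw [hd i, aut_inv, symm_apply_apply]; simp only [mul_assoc]
  calc (∑ i, c i * β (d i)) * ∑ j, e j * α (f j) = ∑ i, ∑ j, c i * (e j * f j) * d i := by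
        simp only [Finset.sum_mul_sum, key]
    _ = ∑ i, c i * (∑ j, e j * f j) * d i := by simp only [Finset.mul_sum, Finset.sum_mul]
    _ = 1 := by simp only [hef, mul_one, hcd]

theorem exists_units_mul_mul_inv_eq_commutatorElement
    (hα : (1 : A) ∈ α.twistedCentralizer * α⁻¹.twistedCentralizer)
    (hβ : (1 : A) ∈ β.twistedCentralizer * β⁻¹.twistedCentralizer) :
    ∃ u : Aˣ, ∀ x, ↑u * x * ↑u⁻¹ = ⁅α, β⁆ x := by
  obtain ⟨n, c, d, hc, hd, hcd⟩ := Submodule.exists_fin_sum_mul_eq_of_mem_mul hα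
  obtain ⟨m, e, f, he, hf, hef⟩ := Submodule.exists_fin_sum_mul_eq_of_mem_mul hβ
  let u : Aˣ := ⟨∑ i, c i * β (d i), ∑ j, e j * α (f j),
    sum_mul_apply_mul_sum_mul_apply_eq_one hd he hcd hef,
    sum_mul_apply_mul_sum_mul_apply_eq_one hf hc hef hcd⟩
  have hu : ∑ i, c i * β (d i) ∈ ⁅α, β⁆.twistedCentralizer :=
    Submodule.sum_mem _ fun i _ => by
      rw [commutatorElement_def, mul_assoc α, mul_assoc α]
      exact mul_mem_twistedCentralizer (hc i) (apply_mem_twistedCentralizer β (hd i))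
  exact ⟨u, units_mul_mul_inv_of_mem_twistedCentralizer (u := u) hu⟩

end AlgEquiv

theorem rosenberg_zelinsky_out_abelian_general (S A : Type*) [CommRing S] [Ring A] [Algebra S A]
    [Module.Finite S A] [Module.Projective S A]
    (hAz : ∃ e : A ⊗[S] Aᵐᵒᵖ ≃ₗ[S] Module.End S A,
      ∀ (a : A) (b : Aᵐᵒᵖ) (c : A), e (a ⊗ₜ[S] b) c = a * c * b.unop) :
    ∃ κ : Aˣ →* (A ≃ₐ[S] A),
      (∀ (u : Aˣ) (x : A), κ u x = ↑u * x * ↑u⁻¹) ∧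
      ∀ α β : A ≃ₐ[S] A, α * β * α⁻¹ * β⁻¹ ∈ κ.range := by
  obtain ⟨e, he⟩ := hAz
  have hA : Function.Bijective (AlgHom.mulLeftRight S A) := by
    have : (AlgHom.mulLeftRight S A).toLinearMap = e.toLinearMap :=
      TensorProduct.ext' fun a b => LinearMap.ext fun c => by simp [he]
    exact congr_arg DFunLike.coe this ▸ e.bijective
  have hM (α : A ≃ₐ[S] A) : (1 : A) ∈ α.twistedCentralizer * α⁻¹.twistedCentralizer :=
    AlgEquiv.one_mem_twistedCentralizer_mul_inv
      (AlgEquiv.twistedCentralizer_mul_top_eq_top_of_bijective hA α)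
      (AlgEquiv.twistedCentralizer_mul_top_eq_top_of_bijective hA α⁻¹)
  refine ⟨(MulSemiringAction.toAlgAut (ConjAct Aˣ) S A).comp ConjAct.toConjAct.toMonoidHom,
    fun u x => rfl, fun α β => ?_⟩
  obtain ⟨u, hu⟩ := AlgEquiv.exists_units_mul_mul_inv_eq_commutatorElement (hM α) (hM β)
  exact ⟨u, AlgEquiv.ext hu⟩

/-- (Rosenberg–Zelinsky)  Let `A` be an Azumaya algebra over a commutative ring `S`,
i.e. `A` is a faithful, finitely generated projective `S`-module and the canonical map
`A ⊗[S] Aᵐᵒᵖ → End_S(A)`, `a ⊗ b ↦ (c ↦ a c b)`, is an isomorphism.  Then the group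
`Out_S(A)` of `S`-algebra automorphisms of `A` modulo inner automorphisms is abelian:
every commutator of `S`-algebra automorphisms is inner. -/
theorem rosenberg_zelinsky_out_abelian (S A : Type*) [CommRing S] [Ring A] [Algebra S A]
    [FaithfulSMul S A] [Module.Finite S A] [Module.Projective S A]
    (hAz : ∃ e : A ⊗[S] Aᵐᵒᵖ ≃ₗ[S] Module.End S A,
      ∀ (a : A) (b : Aᵐᵒᵖ) (c : A), e (a ⊗ₜ[S] b) c = a * c * b.unop) :
    ∃ κ : Aˣ →* (A ≃ₐ[S] A),
      (∀ (u : Aˣ) (x : A), κ u x = ↑u * x * ↑u⁻¹) ∧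
      ∀ α β : A ≃ₐ[S] A, α * β * α⁻¹ * β⁻¹ ∈ κ.range :=
  rosenberg_zelinsky_out_abelian_general S A hAz
end
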